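/- Let a and b be independent random variables, each with generalized Gaussian density p(x) = (p/(2sΓ(1/p))) exp(−|x/s|^p) for scale s > 0 and shape p > 0. Then the density of the product z = ab is p_z(z) = (p/(sΓ(1/p))²) · K₀(2|z|^{p/2}/s^p), where K₀ is the modified Bessel function of the second kind of order 0. -/

import Mathlib

open MeasureTheory ProbabilityTheory Set Real

/-- The modified Bessel function of the second kind of integer order `n`,
`K_n(x) = ∫₀^∞ exp(−x cosh θ) cosh(nθ) dθ`. -/
noncomputable def besselK (n : ℕ) (x : ℝ) : ℝ :=
  ∫ θ in Set.Ioi (0 : ℝ), Real.exp (-x * Real.cosh θ) * Real.cosh (n * θ)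

/-- The zero-mean generalized Gaussian density with scale `s` and shape `p`. -/
noncomputable def ggDensity (s p x : ℝ) : ℝ :=
  p / (2 * s * Real.Gamma (1 / p)) * Real.exp (-(|x / s| ^ p))

section
variable {s p z : ℝ}

lemma ggDensity_abs (x : ℝ) : ggDensity s p |x| = ggDensity s p x := by
  unfold ggDensity
  rw [abs_div, abs_div, abs_abs]

lemma key_pointwise (hs : 0 < s) (hp : 0 < p) (hz : z ≠ 0) (u : ℝ) :
    |Real.sqrt |z| * (Real.exp (u / p) * (1/p))| •
        (ggDensity s p (Real.sqrt |z| * Real.exp (u / p))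
          * |(Real.sqrt |z| * Real.exp (u / p))⁻¹|
          * ggDensity s p (z / (Real.sqrt |z| * Real.exp (u / p))))
      = (p / (2 * s * Real.Gamma (1 / p)))^2 / p
          * Real.exp (-(2 * (|z| ^ (p/2) / s ^ p)) * Real.cosh u) := by
  have hzpos : 0 < |z| := abs_pos.mpr hz
  set w := Real.sqrt |z| with hw
  have hwpos : 0 < w := Real.sqrt_pos.mpr hzpos
  set φ : ℝ := w * Real.exp (u / p) with hφ
  have hφpos : 0 < φ := by positivity
  set r : ℝ := |z| ^ (p/2) / s ^ p with hr
  have hrpos : 0 < r := by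
    exact div_pos (Real.rpow_pos_of_pos hzpos _) (Real.rpow_pos_of_pos hs _)
  have hφp : φ ^ p = |z| ^ (p/2) * Real.exp u := by
    rw [hφ, Real.mul_rpow hwpos.le (Real.exp_pos _).le, hw, Real.sqrt_eq_rpow,
      ← Real.rpow_mul hzpos.le, Real.rpow_def_of_pos (Real.exp_pos _), Real.log_exp,
      div_mul_cancel₀ _ hp.ne']
    congr 1
    ring
  have h1 : |φ / s| ^ p = r * Real.exp u := by
    rw [abs_of_pos (div_pos hφpos hs), Real.div_rpow hφpos.le hs.le, hφp, hr]
    ring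
  have h2 : |z / φ / s| ^ p = r * Real.exp (-u) := by
    rw [abs_div, abs_div, abs_of_pos hφpos, abs_of_pos hs,
      Real.div_rpow (div_nonneg hzpos.le hφpos.le) hs.le,
      Real.div_rpow hzpos.le hφpos.le, hφp, hr]
    have hzp : |z| ^ p = |z| ^ (p/2) * |z| ^ (p/2) := by
      rw [← Real.rpow_add hzpos]
      congr 1
      ring
    rw [hzp, Real.exp_neg]
    have h3 : (0:ℝ) < |z| ^ (p/2) := Real.rpow_pos_of_pos hzpos _
    field_simp
  have habs1 : |φ⁻¹| = φ⁻¹ := abs_of_pos (by positivity)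
  have habs2 : |w * (Real.exp (u/p) * (1/p))| = φ * (1/p) := by
    rw [abs_of_pos (by positivity)]
    rw [hφ]; ring
  rw [habs2, habs1, smul_eq_mul]
  unfold ggDensity
  rw [h1, h2]
  have hexp : Real.exp (-(r * Real.exp u)) * Real.exp (-(r * Real.exp (-u)))
      = Real.exp (-(2*r) * Real.cosh u) := by
    rw [← Real.exp_add, Real.cosh_eq]
    congr 1
    ring
  rw [← hexp]
  field_simp
end

lemma half_le_cosh (θ : ℝ) (hθ : 0 ≤ θ) : θ / 2 ≤ Real.cosh θ := by
  rw [Real.cosh_eq]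
  nlinarith [Real.add_one_le_exp θ, Real.exp_pos (-θ)]

lemma besselK_integrableOn {x : ℝ} (hx : 0 < x) :
    IntegrableOn (fun θ => Real.exp (-x * Real.cosh θ)) (Set.Ioi 0) := by
  apply Integrable.mono' ((exp_neg_integrableOn_Ioi 0 (by positivity : (0:ℝ) < x/2)))
  · exact (Real.continuous_exp.comp ((continuous_const.mul Real.continuous_cosh))).aestronglyMeasurable
  · filter_upwards [ae_restrict_mem measurableSet_Ioi] with θ hθ
    rw [Real.norm_eq_abs, abs_of_pos (Real.exp_pos _), Real.exp_le_exp]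
    have := half_le_cosh θ (le_of_lt hθ)
    nlinarith [hx]

lemma besselK_zero_eq {x : ℝ} :
    besselK 0 x = ∫ θ in Set.Ioi (0:ℝ), Real.exp (-x * Real.cosh θ) := by
  simp [besselK]

lemma integrable_comp_abs {f : ℝ → ℝ} (hf : IntegrableOn f (Ioi 0)) :
    Integrable (fun x => f |x|) := by
  have hIoi : IntegrableOn (fun x => f |x|) (Ioi 0) := by
    apply hf.congr_fun (fun x hx => by rw [abs_of_pos hx]) measurableSet_Ioi
  have hIic : IntegrableOn (fun x ↦ f |x|) (Iic 0) := by
    rw [← Measure.map_neg_eq_self (volume : Measure ℝ)]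
    have m : MeasurableEmbedding fun x : ℝ => -x := (Homeomorph.neg ℝ).measurableEmbedding
    rw [m.integrableOn_map_iff]
    simp_rw [Function.comp_def, abs_neg, neg_preimage, neg_Iic, neg_zero]
    exact (integrableOn_Ici_iff_integrableOn_Ioi (hb := enorm_ne_top)).mpr hIoi
  have := hIic.union hIoi
  rwa [Iic_union_Ioi, integrableOn_univ] at this

lemma cosh_integral {r : ℝ} (hr : 0 < r) :
    (∫ u : ℝ, Real.exp (-(2*r) * Real.cosh u)) = 2 * besselK 0 (2*r) := by
  have h : ∀ u : ℝ, Real.exp (-(2*r) * Real.cosh u)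
      = (fun t => Real.exp (-(2*r) * Real.cosh t)) |u| := by
    intro u; simp [Real.cosh_abs]
  rw [besselK_zero_eq]
  calc (∫ u : ℝ, Real.exp (-(2*r) * Real.cosh u))
      = ∫ u : ℝ, (fun t => Real.exp (-(2*r) * Real.cosh t)) |u| := by
        exact integral_congr_ae (Filter.Eventually.of_forall h)
    _ = 2 * ∫ θ in Set.Ioi (0:ℝ), Real.exp (-(2*r) * Real.cosh θ) :=
        integral_comp_abs (f := fun t => Real.exp (-(2*r) * Real.cosh t))

lemma cosh_integrable {r : ℝ} (hr : 0 < r) :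
    Integrable (fun u : ℝ => Real.exp (-(2*r) * Real.cosh u)) := by
  have := integrable_comp_abs (f := fun t => Real.exp (-(2*r) * Real.cosh t))
    (besselK_integrableOn (by positivity))
  exact this.congr (Filter.Eventually.of_forall (fun u => by simp [Real.cosh_abs]))

lemma key_real {s p z : ℝ} (hs : 0 < s) (hp : 0 < p) (hz : z ≠ 0) :
    Integrable (fun a => ggDensity s p a * |a⁻¹| * ggDensity s p (z/a)) ∧
    ∫ a, ggDensity s p a * |a⁻¹| * ggDensity s p (z/a)
      = p / (s * Real.Gamma (1 / p)) ^ 2 * besselK 0 (2 * |z| ^ (p/2) / s ^ p) := by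
  have hzpos : 0 < |z| := abs_pos.mpr hz
  set w := Real.sqrt |z| with hw
  have hwpos : 0 < w := Real.sqrt_pos.mpr hzpos
  set G : ℝ → ℝ := fun a => ggDensity s p a * |a⁻¹| * ggDensity s p (z/a) with hG
  set φ : ℝ → ℝ := fun u => w * Real.exp (u / p) with hφ
  set φ' : ℝ → ℝ := fun u => w * (Real.exp (u / p) * (1/p)) with hφ'
  set r : ℝ := |z| ^ (p/2) / s ^ p with hr
  have hrpos : 0 < r := div_pos (Real.rpow_pos_of_pos hzpos _) (Real.rpow_pos_of_pos hs _)
  have hderiv : ∀ u ∈ (univ : Set ℝ), HasDerivWithinAt φ (φ' u) univ u := by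
    intro u _
    exact ((((hasDerivAt_id u).div_const p).exp).const_mul w).hasDerivWithinAt
  have hinj : InjOn φ univ := by
    intro u _ v _ h
    have h2 : Real.exp (u/p) = Real.exp (v/p) := mul_left_cancel₀ hwpos.ne' h
    have h3 := Real.exp_injective h2
    field_simp at h3
    exact h3
  have himg : φ '' univ = Ioi 0 := by
    rw [image_univ]
    ext y
    simp only [mem_range, mem_Ioi]
    constructor
    · rintro ⟨u, rfl⟩; positivity
    · intro hy
      refine ⟨p * Real.log (y / w), ?_⟩
      show w * Real.exp (p * Real.log (y / w) / p) = y
      rw [mul_div_cancel_left₀ _ hp.ne', Real.exp_log (div_pos hy hwpos)]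
      field_simp
  have hpt : ∀ u : ℝ, |φ' u| • G (φ u)
      = (p / (2 * s * Real.Gamma (1 / p)))^2 / p * Real.exp (-(2*r) * Real.cosh u) :=
    fun u => key_pointwise hs hp hz u
  have hIoiInt : IntegrableOn G (Ioi 0) := by
    rw [← himg, integrableOn_image_iff_integrableOn_abs_deriv_smul MeasurableSet.univ hderiv hinj]
    rw [integrableOn_univ]
    have h4 := (cosh_integrable hrpos).const_mul ((p / (2 * s * Real.Gamma (1 / p)))^2 / p)
    apply h4.congr
    filter_upwards with u
    exact (hpt u).symm
  have hIoiVal : ∫ a in Ioi 0, G a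
      = (p / (2 * s * Real.Gamma (1 / p)))^2 / p * (2 * besselK 0 (2*r)) := by
    rw [← himg, integral_image_eq_integral_abs_deriv_smul MeasurableSet.univ hderiv hinj,
      Measure.restrict_univ]
    calc (∫ u, |φ' u| • G (φ u)) = ∫ u, (p / (2 * s * Real.Gamma (1 / p)))^2 / p
        * Real.exp (-(2*r) * Real.cosh u) := integral_congr_ae (.of_forall hpt)
      _ = _ := by rw [integral_const_mul, cosh_integral hrpos]
  have hGabs : ∀ a, G |a| = G a := by
    intro a
    show ggDensity s p |a| * |(|a|)⁻¹| * ggDensity s p (z / |a|)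
      = ggDensity s p a * |a⁻¹| * ggDensity s p (z / a)
    rw [ggDensity_abs]
    congr 1
    · congr 1
      rw [abs_inv, abs_inv, abs_abs]
    · rw [← ggDensity_abs (z / |a|), ← ggDensity_abs (z / a)]
      congr 1
      rw [abs_div, abs_div, abs_abs]
  have hInt : Integrable G :=
    (integrable_comp_abs hIoiInt).congr (Filter.Eventually.of_forall hGabs)
  refine ⟨hInt, ?_⟩
  have hval : ∫ a, G a = 2 * ∫ a in Ioi 0, G a := by
    rw [← integral_comp_abs (f := G)]
    exact integral_congr_ae (.of_forall fun a => (hGabs a).symm)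
  have hΓ : 0 < Real.Gamma (1/p) := Real.Gamma_pos_of_pos (by positivity)
  have harg : 2 * |z| ^ (p/2) / s ^ p = 2 * r := by rw [hr]; ring
  show ∫ a, G a = _
  rw [hval, hIoiVal, harg]
  field_simp


lemma ggDensity_nonneg {s p : ℝ} (hs : 0 < s) (hp : 0 < p) (x : ℝ) : 0 ≤ ggDensity s p x := by
  unfold ggDensity
  have hΓ : 0 < Real.Gamma (1/p) := Real.Gamma_pos_of_pos (by positivity)
  positivity

lemma ggDensity_measurable {s p : ℝ} : Measurable (ggDensity s p) := by
  unfold ggDensity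
  exact measurable_const.mul (((measurable_id.div_const s).abs.pow_const p).neg.exp)

lemma core_lintegral {s p z : ℝ} (hs : 0 < s) (hp : 0 < p) (hz : z ≠ 0) :
    ∫⁻ a, ENNReal.ofReal (ggDensity s p a) * ENNReal.ofReal |a⁻¹|
        * ENNReal.ofReal (ggDensity s p (z / a)) ∂volume
      = ENNReal.ofReal (p / (s * Real.Gamma (1 / p)) ^ 2
          * besselK 0 (2 * |z| ^ (p / 2) / s ^ p)) := by
  obtain ⟨hInt, hval⟩ := key_real hs hp hz
  rw [← hval, ofReal_integral_eq_lintegral_ofReal hInt (Filter.Eventually.of_forall fun a =>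
    mul_nonneg (mul_nonneg (ggDensity_nonneg hs hp a) (abs_nonneg _)) (ggDensity_nonneg hs hp _))]
  refine lintegral_congr fun a => ?_
  rw [ENNReal.ofReal_mul (mul_nonneg (ggDensity_nonneg hs hp a) (abs_nonneg _)),
    ENNReal.ofReal_mul (ggDensity_nonneg hs hp a)]

/-- If `a` and `b` are independent with generalized Gaussian density of scale `s` and
shape `p`, the product `z = ab` has density
`p_z(z) = (p/(sΓ(1/p))²)·K₀(2|z|^{p/2}/s^p)`. -/
theorem density_of_product_of_generalized_gaussians
    {Ω : Type*} [MeasureSpace Ω] [IsProbabilityMeasure (ℙ : Measure Ω)]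
    (s p : ℝ) (hs : 0 < s) (hp : 0 < p)
    (A B : Ω → ℝ) (hA : Measurable A) (hB : Measurable B)
    (hindep : IndepFun A B ℙ)
    (hlawA : Measure.map A ℙ
        = volume.withDensity (fun x => ENNReal.ofReal (ggDensity s p x)))
    (hlawB : Measure.map B ℙ
        = volume.withDensity (fun x => ENNReal.ofReal (ggDensity s p x))) :
    Measure.map (fun ω => A ω * B ω) ℙ
      = volume.withDensity (fun z => ENNReal.ofReal
          (p / (s * Real.Gamma (1 / p)) ^ 2 * besselK 0 (2 * |z| ^ (p / 2) / s ^ p))) := by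
  classical
  set f : ℝ → ENNReal := fun x => ENNReal.ofReal (ggDensity s p x) with hfdef
  have hfm : Measurable f := ggDensity_measurable.ennreal_ofReal
  set μ : Measure ℝ := volume.withDensity f with hμ
  have hae0 : ∀ᵐ x : ℝ ∂(volume : Measure ℝ), x ≠ (0:ℝ) := by
    have h0 : {x : ℝ | ¬ x ≠ 0} = {0} := by ext x; simp
    rw [ae_iff, h0]
    exact measure_singleton 0
  have hpair : Measure.map (fun ω => (A ω, B ω)) ℙ = μ.prod μ := by
    have h := (indepFun_iff_map_prod_eq_prod_map_map hA.aemeasurable hB.aemeasurable).mp hindep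
    rw [hlawA, hlawB] at h
    exact h
  have hmul : Measure.map (fun ω => A ω * B ω) ℙ
      = Measure.map (fun q : ℝ × ℝ => q.1 * q.2) (μ.prod μ) := by
    rw [← hpair, Measure.map_map measurable_mul (hA.prodMk hB)]
    rfl
  rw [hmul]
  ext E hE
  have hE' : MeasurableSet ((fun q : ℝ × ℝ => q.1 * q.2) ⁻¹' E) := measurable_mul hE
  rw [Measure.map_apply measurable_mul hE, withDensity_apply _ hE, Measure.prod_apply hE']
  have hgm : Measurable fun a : ℝ => μ (Prod.mk a ⁻¹' ((fun q : ℝ × ℝ => q.1 * q.2) ⁻¹' E)) :=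
    measurable_measure_prodMk_left hE'
  rw [hμ, lintegral_withDensity_eq_lintegral_mul _ hfm hgm]
  have hμsec : ∀ᵐ a : ℝ ∂(volume : Measure ℝ),
      (f * fun a : ℝ =>
          (volume.withDensity f) (Prod.mk a ⁻¹' ((fun q : ℝ × ℝ => q.1 * q.2) ⁻¹' E))) a
        = ∫⁻ zz in E, f a * ENNReal.ofReal |a⁻¹| * f (zz / a) ∂volume := by
    filter_upwards [hae0] with a ha
    have hsec : (Prod.mk a ⁻¹' ((fun q : ℝ × ℝ => q.1 * q.2) ⁻¹' E))
        = (fun b => a * b) ⁻¹' E := rfl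
    have hmap : ∫⁻ zz in E, f (zz / a) ∂(Measure.map (fun b => a * b) volume)
        = ∫⁻ b in (fun b => a * b) ⁻¹' E, f b ∂volume := by
      rw [setLIntegral_map (f := fun zz => f (zz / a)) hE
        (hfm.comp (measurable_id.div_const a)) (measurable_const_mul a)]
      refine lintegral_congr fun b => ?_
      rw [mul_div_cancel_left₀ _ ha]
    rw [Real.map_volume_mul_left ha] at hmap
    rw [Measure.restrict_smul, lintegral_smul_measure, smul_eq_mul] at hmap
    simp only [Pi.mul_apply]
    rw [hsec, withDensity_apply _ ((measurable_const_mul a) hE), ← hmap,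
      ← lintegral_const_mul' _ _ ENNReal.ofReal_ne_top,
      ← lintegral_const_mul' _ _ ENNReal.ofReal_ne_top]
    refine lintegral_congr fun zz => ?_
    ring
  rw [lintegral_congr_ae hμsec]
  have hswap : ∫⁻ a : ℝ, ∫⁻ zz in E, f a * ENNReal.ofReal |a⁻¹| * f (zz / a) ∂volume ∂volume
      = ∫⁻ zz in E, ∫⁻ a : ℝ, f a * ENNReal.ofReal |a⁻¹| * f (zz / a) ∂volume ∂volume := by
    refine lintegral_lintegral_swap ?_
    apply Measurable.aemeasurable
    exact ((hfm.comp measurable_fst).mul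
        (measurable_fst.inv.abs.ennreal_ofReal)).mul
      (hfm.comp (measurable_snd.div measurable_fst))
  rw [hswap]
  refine lintegral_congr_ae ?_
  filter_upwards [ae_restrict_of_ae hae0] with zz hzz
  exact core_lintegral hs hp hzz
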